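/- In the homogenized Weyl algebra H (the coordinate ring of the canonical family Q_{𝔸¹}Ω_{𝔸ⁿ} of deformation quantizations of the cotangent bundle of 𝔸ⁿ), no nonzero element is annihilated, from the left or from the right, by a nonzero polynomial in the central element ƛ: for every nonzero q ∈ Polynomial ℂ and every h ∈ H, if (Polynomial.aeval ƛ q) * h = 0 or h * (Polynomial.aeval ƛ q) = 0, then h = 0. (Property (3) of the canonical family in Section 5.2: Q_{𝔸¹}Ω_W is a flat family over 𝔸¹ = Spec ℂ[λ].) -/

import Mathlib

/-- The generator `Xᵢ` of the free algebra `F = FreeAlgebra ℂ ((Fin n ⊕ Fin n) ⊕ Unit)`. -/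
noncomputable def fwX (n : ℕ) (i : Fin n) : FreeAlgebra ℂ ((Fin n ⊕ Fin n) ⊕ Unit) :=
  FreeAlgebra.ι ℂ (Sum.inl (Sum.inl i))

/-- The generator `Pᵢ` of the free algebra `F`. -/
noncomputable def fwP (n : ℕ) (i : Fin n) : FreeAlgebra ℂ ((Fin n ⊕ Fin n) ⊕ Unit) :=
  FreeAlgebra.ι ℂ (Sum.inl (Sum.inr i))

/-- The generator `Λ` of the free algebra `F`. -/
noncomputable def fwL (n : ℕ) : FreeAlgebra ℂ ((Fin n ⊕ Fin n) ⊕ Unit) :=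
  FreeAlgebra.ι ℂ (Sum.inr Unit.unit)

/-- The defining relations of the homogenized Weyl algebra (the coordinate ring of
the canonical family `Q_{𝔸¹}Ω_{𝔸ⁿ}` of deformation quantizations of the cotangent
bundle of `𝔸ⁿ`, Section 5.2):
`[xᵢ,xⱼ] = 0`, `[pᵢ,pⱼ] = 0`, `[ƛ,xᵢ] = 0`, `[ƛ,pᵢ] = 0`,
`[pᵢ,xⱼ] = δᵢⱼ ƛ`. -/
inductive WeylRel (n : ℕ) :
    FreeAlgebra ℂ ((Fin n ⊕ Fin n) ⊕ Unit) →
    FreeAlgebra ℂ ((Fin n ⊕ Fin n) ⊕ Unit) → Prop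
  | xx (i j : Fin n) : WeylRel n (fwX n i * fwX n j) (fwX n j * fwX n i)
  | pp (i j : Fin n) : WeylRel n (fwP n i * fwP n j) (fwP n j * fwP n i)
  | lx (i : Fin n) : WeylRel n (fwL n * fwX n i) (fwX n i * fwL n)
  | lp (i : Fin n) : WeylRel n (fwL n * fwP n i) (fwP n i * fwL n)
  | px_same (i : Fin n) : WeylRel n (fwP n i * fwX n i) (fwX n i * fwP n i + fwL n)
  | px_ne (i j : Fin n) : i ≠ j → WeylRel n (fwP n i * fwX n j) (fwX n j * fwP n i)

/-- The homogenized Weyl algebra `H`. -/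
noncomputable abbrev HWeyl (n : ℕ) := RingQuot (WeylRel n)

/-- The element `x i` of `H`. -/
noncomputable def hx (n : ℕ) (i : Fin n) : HWeyl n :=
  RingQuot.mkAlgHom ℂ (WeylRel n) (fwX n i)

/-- The element `p i` of `H`. -/
noncomputable def hp (n : ℕ) (i : Fin n) : HWeyl n :=
  RingQuot.mkAlgHom ℂ (WeylRel n) (fwP n i)

/-- The central element `ƛ` of `H`. -/
noncomputable def hl (n : ℕ) : HWeyl n :=
  RingQuot.mkAlgHom ℂ (WeylRel n) (fwL n)

/-!
`H` acts on `ℂ[x, ξ, λ]` with `xᵢ` and `ƛ` acting by multiplication and `pᵢ` by `ξᵢ + λ ∂/∂xᵢ`.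
The normal-ordering map `x^a ξ^b λ^c ↦ x^a p^b ƛ^c` intertwines this action with left
multiplication on `H`, so `h ↦ h • 1` is injective. As `ƛ` acts by multiplication by `λ` on an
integral domain, a nonzero polynomial in `ƛ` annihilates no nonzero `h`; on the right too,
since `ƛ` is central.
-/

open MvPolynomial

namespace MvPolynomial

theorem pderiv_pderiv_comm {R σ : Type*} [CommRing R] (i j : σ) (f : MvPolynomial σ R) :
    pderiv i (pderiv j f) = pderiv j (pderiv i f) := by
  have : ⁅pderiv (R := R) (σ := σ) i, pderiv (R := R) j⁆ = 0 := by
    classical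
    refine derivation_ext fun k => ?_
    simp [Derivation.commutator_apply, pderiv_X, Pi.single_apply, apply_ite]
  simpa [Derivation.commutator_apply, sub_eq_zero] using congrArg (· f) this

variable {R σ A : Type*} [CommSemiring R] [Semiring A] [Algebra R A]

open scoped IsMulCommutative in
noncomputable def aevalOfCommute (x : σ → A) (hx : ∀ i j, Commute (x i) (x j)) :
    MvPolynomial σ R →ₐ[R] A :=
  haveI := Algebra.isMulCommutative_adjoin R (s := Set.range x)
    (by rintro _ ⟨i, rfl⟩ _ ⟨j, rfl⟩; exact hx i j)
  (Algebra.adjoin R (Set.range x)).val.comp (aeval fun i => ⟨x i, Algebra.subset_adjoin ⟨i, rfl⟩⟩)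

@[simp]
theorem aevalOfCommute_X (x : σ → A) (hx : ∀ i j, Commute (x i) (x j)) (i : σ) :
    aevalOfCommute x hx (X i : MvPolynomial σ R) = x i := by
  simp [aevalOfCommute]

theorem linearMap_ext_C_mul_map {B M : Type*} [CommSemiring B] [Algebra R B] [AddCommMonoid M]
    [Module R M] {φ ψ : MvPolynomial σ B →ₗ[R] M}
    (h : ∀ (b : B) (g : MvPolynomial σ R),
      φ (C b * map (algebraMap R B) g) = ψ (C b * map (algebraMap R B) g)) :
    φ = ψ := by
  refine LinearMap.ext fun f => ?_
  induction f using MvPolynomial.induction_on' with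
  | monomial a b => simpa [C_mul_monomial] using h b (monomial a 1)
  | add f g hf hg => rw [map_add, map_add, hf, hg]

end MvPolynomial

section HWeyl

variable (n : ℕ)

theorem hx_commute (i j : Fin n) : Commute (hx n i) (hx n j) := by
  simpa only [hx, Commute, SemiconjBy, map_mul] using RingQuot.mkAlgHom_rel ℂ (WeylRel.xx i j)

theorem hp_commute (i j : Fin n) : Commute (hp n i) (hp n j) := by
  simpa only [hp, Commute, SemiconjBy, map_mul] using RingQuot.mkAlgHom_rel ℂ (WeylRel.pp i j)

theorem hl_commute_hx (i : Fin n) : Commute (hl n) (hx n i) := by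
  simpa only [hx, hl, Commute, SemiconjBy, map_mul] using RingQuot.mkAlgHom_rel ℂ (WeylRel.lx i)

theorem hl_commute_hp (i : Fin n) : Commute (hl n) (hp n i) := by
  simpa only [hp, hl, Commute, SemiconjBy, map_mul] using RingQuot.mkAlgHom_rel ℂ (WeylRel.lp i)

theorem hp_mul_hx_self (i : Fin n) : hp n i * hx n i = hx n i * hp n i + hl n := by
  simpa only [hx, hp, hl, map_mul, map_add] using RingQuot.mkAlgHom_rel ℂ (WeylRel.px_same i)

theorem hp_mul_hx_of_ne {i j : Fin n} (h : i ≠ j) : hp n i * hx n j = hx n j * hp n i := by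
  simpa only [hx, hp, map_mul] using RingQuot.mkAlgHom_rel ℂ (WeylRel.px_ne i j h)

@[elab_as_elim]
theorem HWeyl.induction {motive : HWeyl n → Prop}
    (algebraMap : ∀ r, motive (algebraMap ℂ (HWeyl n) r))
    (x : ∀ i, motive (hx n i)) (p : ∀ i, motive (hp n i)) (hbar : motive (hl n))
    (add : ∀ g h, motive g → motive h → motive (g + h))
    (mul : ∀ g h, motive g → motive h → motive (g * h)) (g : HWeyl n) : motive g := by
  obtain ⟨z, rfl⟩ := RingQuot.mkAlgHom_surjective ℂ (WeylRel n) g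
  induction z using FreeAlgebra.induction with
  | grade0 r => simpa only [AlgHom.commutes] using algebraMap r
  | grade1 v =>
    rcases v with (i | i) | ⟨⟩
    exacts [x i, p i, hbar]
  | mul a b ha hb => simpa only [map_mul] using mul _ _ ha hb
  | add a b ha hb => simpa only [map_add] using add _ _ ha hb

theorem commute_hl (g : HWeyl n) : Commute (hl n) g := by
  induction g using HWeyl.induction with
  | algebraMap r => exact Algebra.commute_algebraMap_right r _
  | x i => exact hl_commute_hx n i
  | p i => exact hl_commute_hp n i
  | hbar => exact Commute.refl _
  | add g h hg hh => exact hg.add_right hh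
  | mul g h hg hh => exact hg.mul_right hh

theorem commute_aeval_hl (q : Polynomial ℂ) (g : HWeyl n) :
    Commute (Polynomial.aeval (hl n) q) g :=
  (Algebra.commute_of_mem_adjoin_of_forall_mem_commute (Polynomial.aeval_mem_adjoin_singleton ℂ _)
    fun _ hb => (Set.mem_singleton_iff.1 hb) ▸ (commute_hl n g).symm).symm

noncomputable abbrev evalX : MvPolynomial (Fin n) ℂ →ₐ[ℂ] HWeyl n :=
  aevalOfCommute (hx n) (hx_commute n)

noncomputable abbrev evalPL : MvPolynomial (Option (Fin n)) ℂ →ₐ[ℂ] HWeyl n :=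
  aevalOfCommute (fun o => o.elim (hl n) (hp n)) <| by
    rintro (_ | i) (_ | j)
    exacts [Commute.refl _, hl_commute_hp n j, (hl_commute_hp n i).symm, hp_commute n i j]

theorem hp_mul_evalX (i : Fin n) (g : MvPolynomial (Fin n) ℂ) :
    hp n i * evalX n g = evalX n g * hp n i + evalX n (pderiv i g) * hl n := by
  induction g using MvPolynomial.induction_on with
  | C a => simp [Algebra.commutes]
  | add f g hf hg => simp only [map_add, mul_add, add_mul, hf, hg]; abel
  | mul_X f j hf =>
    have hxj : hp n i * hx n j = hx n j * hp n i + evalX n (pderiv i (X j)) * hl n := by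
      rcases eq_or_ne j i with rfl | hji
      · simp [hp_mul_hx_self]
      · simp [pderiv_X_of_ne hji, hp_mul_hx_of_ne n hji.symm]
    simp only [map_mul, pderiv_mul, map_add, aevalOfCommute_X]
    rw [← mul_assoc, hf, add_mul, mul_assoc, hxj, mul_assoc _ (hl n), (hl_commute_hx n j).eq]
    noncomm_ring

/-- Polynomials in `x₁, …, xₙ` over `ℂ[ξ₁, …, ξₙ, λ]`, where `X (some i)` is `ξᵢ` and `X none`
is `λ`. -/
abbrev WeylPoly := MvPolynomial (Fin n) (MvPolynomial (Option (Fin n)) ℂ)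

noncomputable def weylGen : (Fin n ⊕ Fin n) ⊕ Unit → Module.End ℂ (WeylPoly n)
  | .inl (.inl i) => LinearMap.mulLeft ℂ (X i)
  | .inl (.inr i) => LinearMap.mulLeft ℂ (C (X (some i)))
      + LinearMap.mulLeft ℂ (C (X none)) ∘ₗ (pderiv i).toLinearMap.restrictScalars ℂ
  | .inr _ => LinearMap.mulLeft ℂ (C (X none))

theorem weylGen_rel ⦃a b : FreeAlgebra ℂ ((Fin n ⊕ Fin n) ⊕ Unit)⦄ (h : WeylRel n a b) :
    FreeAlgebra.lift ℂ (weylGen n) a = FreeAlgebra.lift ℂ (weylGen n) b := by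
  cases h <;> refine LinearMap.ext fun f => ?_ <;>
    simp only [fwX, fwP, fwL, weylGen, map_mul, map_add, FreeAlgebra.lift_ι_apply,
      Module.End.mul_apply, LinearMap.add_apply, LinearMap.mulLeft_apply, LinearMap.coe_comp,
      LinearMap.coe_restrictScalars, Derivation.coeFn_coe, Function.comp_apply, Derivation.leibniz,
      smul_eq_mul, derivation_C, pderiv_X, Pi.single_eq_same, Pi.single_eq_of_ne', ne_eq,
      not_false_eq_true, pderiv_pderiv_comm, *] <;> ring

noncomputable def weylRep : HWeyl n →ₐ[ℂ] Module.End ℂ (WeylPoly n) :=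
  RingQuot.liftAlgHom ℂ ⟨FreeAlgebra.lift ℂ (weylGen n), weylGen_rel n⟩

theorem weylRep_hx_apply (i : Fin n) (f : WeylPoly n) : weylRep n (hx n i) f = X i * f := by
  simp [weylRep, hx, fwX, weylGen]

theorem weylRep_hp_apply (i : Fin n) (f : WeylPoly n) :
    weylRep n (hp n i) f = C (X (some i)) * f + C (X none) * pderiv i f := by
  simp [weylRep, hp, fwP, weylGen]

theorem weylRep_hl_apply (f : WeylPoly n) : weylRep n (hl n) f = C (X none) * f := by
  simp [weylRep, hl, fwL, weylGen]

/-- `x^a ξ^b λ^c ↦ x^a p^b ƛ^c`. -/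
noncomputable def normalOrder : WeylPoly n →ₗ[ℂ] HWeyl n :=
  (Finsupp.lsum ℂ fun a => LinearMap.mulLeft ℂ (evalX n (monomial a 1)) ∘ₗ (evalPL n).toLinearMap)
    ∘ₗ (AddMonoidAlgebra.coeffLinearEquiv ℂ).toLinearMap

theorem normalOrder_monomial (a : Fin n →₀ ℕ) (b : MvPolynomial (Option (Fin n)) ℂ) :
    normalOrder n (monomial a b) = evalX n (monomial a 1) * evalPL n b := by
  simp [normalOrder, ← single_eq_monomial]

theorem normalOrder_C_mul_map (b : MvPolynomial (Option (Fin n)) ℂ) (g : MvPolynomial (Fin n) ℂ) :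
    normalOrder n (C b * map (algebraMap ℂ _) g) = evalX n g * evalPL n b := by
  induction g using MvPolynomial.induction_on' with
  | monomial a r =>
    rw [map_monomial, C_mul_monomial, normalOrder_monomial, map_mul, AlgHom.commutes,
      ← Algebra.commutes, ← mul_assoc, ← AlgHom.commutes (evalX n), ← map_mul, algebraMap_eq,
      mul_comm, C_mul_monomial, mul_one]
  | add f g hf hg => rw [map_add, mul_add, map_add, hf, hg, map_add, add_mul]

theorem normalOrder_apply_eq_mul {T : Module.End ℂ (WeylPoly n)} {h : HWeyl n}
    (hT : ∀ b g, normalOrder n (T (C b * map (algebraMap ℂ _) g)) = h * evalX n g * evalPL n b)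
    (f : WeylPoly n) : normalOrder n (T f) = h * normalOrder n f := by
  refine LinearMap.congr_fun (linearMap_ext_C_mul_map (φ := normalOrder n ∘ₗ T)
    (ψ := LinearMap.mulLeft ℂ h ∘ₗ normalOrder n) fun b g => ?_) f
  rw [LinearMap.comp_apply, LinearMap.comp_apply, hT, normalOrder_C_mul_map,
    LinearMap.mulLeft_apply, mul_assoc]

theorem normalOrder_weylRep (g : HWeyl n) (f : WeylPoly n) :
    normalOrder n (weylRep n g f) = g * normalOrder n f := by
  induction g using HWeyl.induction generalizing f with
  | algebraMap r =>
    rw [AlgHom.commutes, Module.algebraMap_end_apply, map_smul, Algebra.smul_def]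
  | x i =>
    refine normalOrder_apply_eq_mul n (fun b g => ?_) f
    rw [weylRep_hx_apply, mul_left_comm, ← map_X (algebraMap ℂ _), ← map_mul,
      normalOrder_C_mul_map, map_mul, aevalOfCommute_X]
  | p i =>
    refine normalOrder_apply_eq_mul n (fun b g => ?_) f
    rw [weylRep_hp_apply, pderiv_C_mul, pderiv_map, ← mul_assoc, ← mul_assoc, ← C_mul, ← C_mul,
      map_add, normalOrder_C_mul_map, normalOrder_C_mul_map, map_mul, map_mul, aevalOfCommute_X,
      aevalOfCommute_X, hp_mul_evalX]
    simp [add_mul, mul_assoc]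
  | hbar =>
    refine normalOrder_apply_eq_mul n (fun b g => ?_) f
    rw [weylRep_hl_apply, ← mul_assoc, ← C_mul, normalOrder_C_mul_map, map_mul, aevalOfCommute_X,
      Option.elim_none, ← mul_assoc, (commute_hl n _).eq]
  | add g h hg hh => rw [map_add, LinearMap.add_apply, map_add, hg, hh, add_mul]
  | mul g h hg hh => rw [map_mul, Module.End.mul_apply, hg, hh, mul_assoc]

theorem normalOrder_one : normalOrder n 1 = 1 := by
  simpa using normalOrder_C_mul_map n 1 1

theorem weylRep_apply_one_injective : Function.Injective fun g : HWeyl n => weylRep n g 1 :=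
  Function.LeftInverse.injective (g := normalOrder n) fun g => by
    simp only [normalOrder_weylRep, normalOrder_one, mul_one]

theorem weylRep_aeval_hl_apply (q : Polynomial ℂ) (f : WeylPoly n) :
    weylRep n (Polynomial.aeval (hl n) q) f = C (Polynomial.aeval (X none) q) * f := by
  have : weylRep n (hl n) = Algebra.lmul ℂ (WeylPoly n) (C (X none)) :=
    LinearMap.ext (weylRep_hl_apply n)
  rw [← Polynomial.aeval_algHom_apply, this, Polynomial.aeval_algHom_apply, ← algebraMap_eq,
    Polynomial.aeval_algebraMap_apply, Algebra.coe_lmul_eq_mul, LinearMap.mul_apply']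

end HWeyl

theorem stmt_11_general (n : ℕ) (q : Polynomial ℂ) (hq : q ≠ 0) (h : HWeyl n)
    (hh : Polynomial.aeval (hl n) q * h = 0 ∨ h * Polynomial.aeval (hl n) q = 0) :
    h = 0 := by
  have hleft : Polynomial.aeval (hl n) q * h = 0 :=
    hh.elim id fun hr => (commute_aeval_hl n q h).eq ▸ hr
  have hrep := congrArg (weylRep n · 1) hleft
  simp only [map_mul, Module.End.mul_apply, weylRep_aeval_hl_apply, map_zero,
    LinearMap.zero_apply] at hrep
  have hne : C (Polynomial.aeval (X none) q) ≠ (0 : WeylPoly n) :=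
    C_ne_zero.2 fun h0 => transcendental_X ℂ none ⟨q, hq, h0⟩
  exact weylRep_apply_one_injective n (by simpa using (mul_eq_zero.1 hrep).resolve_left hne)

/-- Property (3) of the canonical family `Q_{𝔸¹}Ω_{𝔸ⁿ}` (Section 5.2): no nonzero
element of the homogenized Weyl algebra `H` is annihilated, from the left or from
the right, by a nonzero polynomial in the central element `ƛ`; i.e. the family is
flat over `𝔸¹ = Spec ℂ[λ]`. -/
theorem stmt_11 (n : ℕ) (hn : 0 < n) (q : Polynomial ℂ) (hq : q ≠ 0) (h : HWeyl n)
    (hh : Polynomial.aeval (hl n) q * h = 0 ∨ h * Polynomial.aeval (hl n) q = 0) :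
    h = 0 :=
  stmt_11_general n q hq h hh
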